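/- Let p ≥ 1, W̃ ∈ ℝ^{p×p} with 0 ≤ w̃_{jk} ≤ 1 for all j, k, and let s ≥ 1 + max(‖W̃‖₁, ‖W̃‖_∞). Then for every W ∈ ℝ^{p×p} with 0 ≤ w_{jk} ≤ w̃_{jk} for all j, k: (i) every entry of (sI − W∘W)^{-1} has absolute value at most 1; and (ii) the matrix W − ((sI − W∘W)^{-1})^T ∘ W is entrywise nonnegative. -/

import Mathlib

/-!
Since `0 ≤ w_{jk} ≤ w̃_{jk} ≤ 1`, every row of `M = W ∘ W` sums to at most `‖W̃‖_∞ ≤ s - 1`.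
Evaluating `(sI - M) x` at an index `i` where `|x i|` is maximal gives
`s |x i| ≤ |((sI - M) x) i| + (s - 1) |x i|`, hence `‖x‖_∞ ≤ ‖(sI - M) x‖_∞`. So `sI - M` is
invertible, and since it maps each column of `(sI - M)⁻¹` to a unit vector, those columns have
sup norm at most `1`. The entries of `W - ((sI - M)⁻¹)ᵀ ∘ W` are then
`(1 - (sI - M)⁻¹_{kj}) w_{jk} ≥ 0`.
-/

open Matrix

noncomputable def frobNorm {p : ℕ} (W : Matrix (Fin p) (Fin p) ℝ) : ℝ :=
  Real.sqrt (∑ j, ∑ k, (W j k) ^ 2)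

noncomputable def colSumNorm {p : ℕ} (W : Matrix (Fin p) (Fin p) ℝ) : ℝ :=
  ⨆ k, ∑ j, |W j k|

noncomputable def rowSumNorm {p : ℕ} (W : Matrix (Fin p) (Fin p) ℝ) : ℝ :=
  ⨆ j, ∑ k, |W j k|

noncomputable def gradG {p : ℕ} (μ s : ℝ) (Wt W : Matrix (Fin p) (Fin p) ℝ) :
    Matrix (Fin p) (Fin p) ℝ :=
  (μ / 2) • (W - Wt) +
    (2 : ℝ) • Matrix.hadamard ((s • (1 : Matrix (Fin p) (Fin p) ℝ) - Matrix.hadamard W W)⁻¹)ᵀ W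

noncomputable def fObj {p : ℕ} (μ s : ℝ) (Wt W : Matrix (Fin p) (Fin p) ℝ) : ℝ :=
  μ / 2 * frobNorm (Wt - W) ^ 2 +
    (-Real.log ((s • (1 : Matrix (Fin p) (Fin p) ℝ) - Matrix.hadamard W W).det) +
      p * Real.log s)

noncomputable def specRad {p : ℕ} (M : Matrix (Fin p) (Fin p) ℝ) : ENNReal :=
  spectralRadius ℂ (M.map (algebraMap ℝ ℂ))

noncomputable def specNorm {p : ℕ} (M : Matrix (Fin p) (Fin p) ℝ) : ℝ :=
  ‖LinearMap.toContinuousLinearMap (Matrix.toEuclideanLin M)‖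

theorem sum_abs_le_rowSumNorm {p : ℕ} (W : Matrix (Fin p) (Fin p) ℝ) (j : Fin p) :
    ∑ k, |W j k| ≤ rowSumNorm W :=
  le_ciSup (f := fun j => ∑ k, |W j k|) (Set.finite_range _).bddAbove j

section RowSumBound

variable {ι : Type*} [Fintype ι]

theorem abs_apply_le_norm (x : ι → ℝ) (i : ι) : |x i| ≤ ‖x‖ :=
  norm_le_pi_norm x i

theorem abs_mulVec_apply_le (M : Matrix ι ι ℝ) (x : ι → ℝ) (i : ι) :
    |(M *ᵥ x) i| ≤ (∑ j, |M i j|) * ‖x‖ :=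
  calc |(M *ᵥ x) i| = |∑ j, M i j * x j| := rfl
    _ ≤ ∑ j, |M i j| * |x j| := by
      simpa only [abs_mul] using Finset.abs_sum_le_sum_abs (fun j => M i j * x j) Finset.univ
    _ ≤ ∑ j, |M i j| * ‖x‖ := by gcongr with j; exact abs_apply_le_norm x j
    _ = (∑ j, |M i j|) * ‖x‖ := (Finset.sum_mul ..).symm

variable [DecidableEq ι] {M : Matrix ι ι ℝ} {s : ℝ}

theorem norm_le_norm_smul_one_sub_mulVec (hM : ∀ i, ∑ j, |M i j| ≤ s - 1) (x : ι → ℝ) :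
    ‖x‖ ≤ ‖(s • 1 - M) *ᵥ x‖ := by
  rcases isEmpty_or_nonempty ι with hι | hι
  · simp [Subsingleton.elim x 0]
  obtain ⟨i, -, hi⟩ := Finset.exists_max_image Finset.univ (fun i => |x i|) Finset.univ_nonempty
  have hx : ‖x‖ ≤ |x i| :=
    (pi_norm_le_iff_of_nonneg (abs_nonneg _)).mpr fun l => hi l (Finset.mem_univ l)
  have hs : 1 ≤ s := by
    linarith [hM i, Finset.sum_nonneg fun j (_ : j ∈ Finset.univ) => abs_nonneg (M i j)]
  have hsplit : s * x i = ((s • 1 - M) *ᵥ x) i + (M *ᵥ x) i := by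
    simp [sub_mulVec, smul_mulVec]
  have hMx : |(M *ᵥ x) i| ≤ (s - 1) * |x i| :=
    (abs_mulVec_apply_le M x i).trans (mul_le_mul (hM i) hx (norm_nonneg x) (by linarith))
  have : s * |x i| ≤ ‖(s • 1 - M) *ᵥ x‖ + (s - 1) * |x i| :=
    calc s * |x i| = |s * x i| := by rw [abs_mul, abs_of_nonneg (by linarith : (0 : ℝ) ≤ s)]
      _ ≤ |((s • 1 - M) *ᵥ x) i| + |(M *ᵥ x) i| := hsplit ▸ abs_add_le _ _
      _ ≤ ‖(s • 1 - M) *ᵥ x‖ + (s - 1) * |x i| := add_le_add (abs_apply_le_norm _ i) hMx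
  linarith

theorem det_smul_one_sub_ne_zero (hM : ∀ i, ∑ j, |M i j| ≤ s - 1) :
    (s • 1 - M).det ≠ 0 := by
  intro hdet
  obtain ⟨v, hv, hAv⟩ := exists_mulVec_eq_zero_iff.mpr hdet
  have := norm_le_norm_smul_one_sub_mulVec hM v
  rw [hAv, norm_zero] at this
  exact hv (norm_le_zero_iff.mp this)

theorem abs_inv_smul_one_sub_apply_le_one (hM : ∀ i, ∑ j, |M i j| ≤ s - 1) (i j : ι) :
    |(s • 1 - M)⁻¹ i j| ≤ 1 := by
  set A := s • 1 - M
  have hcol : A *ᵥ (A⁻¹ *ᵥ Pi.single j 1) = Pi.single j 1 := by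
    rw [mulVec_mulVec, mul_nonsing_inv A (isUnit_iff_ne_zero.mpr (det_smul_one_sub_ne_zero hM)),
      one_mulVec]
  calc |A⁻¹ i j| = |(A⁻¹ *ᵥ Pi.single j 1) i| := by rw [mulVec_single_one]; rfl
    _ ≤ ‖A⁻¹ *ᵥ Pi.single j 1‖ := abs_apply_le_norm _ i
    _ ≤ ‖A *ᵥ (A⁻¹ *ᵥ Pi.single j 1)‖ := norm_le_norm_smul_one_sub_mulVec hM _
    _ = 1 := by rw [hcol, Pi.norm_single, norm_one]

end RowSumBound

theorem sub_transpose_hadamard_apply_nonneg {ι : Type*} {W B : Matrix ι ι ℝ} {j k : ι}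
    (hW : 0 ≤ W j k) (hB : B k j ≤ 1) : 0 ≤ (W - Bᵀ ⊙ W) j k := by
  have : (W - Bᵀ ⊙ W) j k = (1 - B k j) * W j k := by
    simp only [Matrix.sub_apply, hadamard_apply, transpose_apply]
    ring
  rw [this]
  exact mul_nonneg (sub_nonneg.mpr hB) hW

theorem stmt16_general {p : ℕ} (Wt : Matrix (Fin p) (Fin p) ℝ)
    (hWt : ∀ j k, 0 ≤ Wt j k ∧ Wt j k ≤ 1) (s : ℝ)
    (hs : 1 + max (colSumNorm Wt) (rowSumNorm Wt) ≤ s) :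
    ∀ W : Matrix (Fin p) (Fin p) ℝ, (∀ j k, 0 ≤ W j k ∧ W j k ≤ Wt j k) →
      (∀ j k, |((s • (1 : Matrix (Fin p) (Fin p) ℝ) - Matrix.hadamard W W)⁻¹) j k| ≤ 1) ∧
      (∀ j k, 0 ≤ (W - Matrix.hadamard
        ((s • (1 : Matrix (Fin p) (Fin p) ℝ) - Matrix.hadamard W W)⁻¹)ᵀ W) j k) := by
  intro W hW
  have hsq : ∀ j k, |(W ⊙ W) j k| ≤ |Wt j k| := fun j k => by
    obtain ⟨hW0, hWWt⟩ := hW j k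
    obtain ⟨hWt0, hWt1⟩ := hWt j k
    rw [hadamard_apply, abs_of_nonneg (mul_nonneg hW0 hW0), abs_of_nonneg hWt0]
    nlinarith
  have hrow : ∀ j, ∑ k, |(W ⊙ W) j k| ≤ s - 1 := fun j =>
    calc ∑ k, |(W ⊙ W) j k| ≤ ∑ k, |Wt j k| := Finset.sum_le_sum fun k _ => hsq j k
      _ ≤ rowSumNorm Wt := sum_abs_le_rowSumNorm Wt j
      _ ≤ s - 1 := by linarith [le_max_right (colSumNorm Wt) (rowSumNorm Wt)]
  have hinv := abs_inv_smul_one_sub_apply_le_one hrow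
  exact ⟨hinv, fun j k =>
    sub_transpose_hadamard_apply_nonneg (hW j k).1 (abs_le.mp (hinv k j)).2⟩

/-- the entries of (sI − W∘W)⁻¹ are bounded by one in absolute
value, and W − ((sI − W∘W)⁻¹)ᵀ ∘ W is entrywise nonnegative. -/
theorem stmt16 {p : ℕ} (hp : 1 ≤ p) (Wt : Matrix (Fin p) (Fin p) ℝ)
    (hWt : ∀ j k, 0 ≤ Wt j k ∧ Wt j k ≤ 1) (s : ℝ)
    (hs : 1 + max (colSumNorm Wt) (rowSumNorm Wt) ≤ s) :
    ∀ W : Matrix (Fin p) (Fin p) ℝ, (∀ j k, 0 ≤ W j k ∧ W j k ≤ Wt j k) →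
      (∀ j k, |((s • (1 : Matrix (Fin p) (Fin p) ℝ) - Matrix.hadamard W W)⁻¹) j k| ≤ 1) ∧
      (∀ j k, 0 ≤ (W - Matrix.hadamard
        ((s • (1 : Matrix (Fin p) (Fin p) ℝ) - Matrix.hadamard W W)⁻¹)ᵀ W) j k) :=
  stmt16_general Wt hWt s hs
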